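/- arXiv:2602.22135 — 2 statements merged into one kernel-verified Lean document; each statement's English description precedes it below -/
import Mathlib

section
/- For predicates P : A → Prop and Q : B → Prop, ◯_P ≤ ◯_Q if and only if ∀ a : A, ◯_Q (P a). -/
def Oracle {A : Type*} (P : A → Prop) (s : Prop) : Prop :=
  ∀ r : Prop, (s → r) → (∀ a, (P a → r) → r) → r

theorem oracle_query {A : Type*} (P : A → Prop) (a : A) : Oracle P (P a) :=
  fun _ hr hP => hP a hr

theorem Oracle.lift {A B : Type*} {P : A → Prop} {Q : B → Prop} {s : Prop}
    (hs : Oracle P s) (hPQ : ∀ a, Oracle Q (P a)) : Oracle Q s :=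
  fun r hr hQ => hs r hr fun a hPa => hPQ a r hPa hQ

theorem oracle_le_iff {A B : Type*} (P : A → Prop) (Q : B → Prop) :
    (∀ s : Prop, Oracle P s → Oracle Q s) ↔ (∀ a : A, Oracle Q (P a)) :=
  ⟨fun hle a => hle _ (oracle_query P a), fun hPQ _ hs => hs.lift hPQ⟩
end

section
/- For a propositional container (A,P) and a modality j, there exists a container morphism from (A,P) to the container of j-dense propositions (with I_j(s,u) := s) if and only if ◯_P ≤ j. -/
section

variable {A : Type*} {P : A → Prop} {j : Prop → Prop}

theorem Oracle.query (a : A) : Oracle P (P a) :=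
  fun _ ret ask => ask a ret

theorem Oracle.le_of_forall_dense (mono : ∀ p q : Prop, (p → q) → (j p → j q))
    (infl : ∀ p : Prop, p → j p) (idem : ∀ p : Prop, j (j p) → j p)
    (hP : ∀ a, j (P a)) {s : Prop} (o : Oracle P s) : j s :=
  o (j s) (infl s) fun a k => idem s (mono _ _ k (hP a))

theorem oracle_le_iff_forall_dense (mono : ∀ p q : Prop, (p → q) → (j p → j q))
    (infl : ∀ p : Prop, p → j p) (idem : ∀ p : Prop, j (j p) → j p) :
    (∀ s : Prop, Oracle P s → j s) ↔ ∀ a, j (P a) :=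
  ⟨fun h a => h _ (Oracle.query a), fun hP _ => Oracle.le_of_forall_dense mono infl idem hP⟩

theorem exists_dense_morphism_iff_forall_dense (mono : ∀ p q : Prop, (p → q) → (j p → j q)) :
    (∃ t : A → { s : Prop // j s }, ∀ a : A, (t a).1 → P a) ↔ ∀ a, j (P a) :=
  ⟨fun ⟨t, q⟩ a => mono _ _ (q a) (t a).2, fun hP => ⟨fun a => ⟨P a, hP a⟩, fun _ => id⟩⟩

end

theorem container_morphism_iff_oracle_le {A : Type*} (P : A → Prop)
    (j : Prop → Prop)
    (mono : ∀ p q : Prop, (p → q) → (j p → j q))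
    (infl : ∀ p : Prop, p → j p)
    (idem : ∀ p : Prop, j (j p) → j p) :
    (∃ t : A → { s : Prop // j s }, ∀ a : A, (t a).1 → P a) ↔
      (∀ s : Prop, Oracle P s → j s) :=
  (exists_dense_morphism_iff_forall_dense mono).trans
    (oracle_le_iff_forall_dense mono infl idem).symm
end
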